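/- arXiv:1212.0821 — 3 statements merged into one kernel-verified Lean document; each statement's English description precedes it below -/
import Mathlib

section
/- Consistency theorem for greedy κ-sums (Theorem 1): Let S be an index set and (a_s)_{s∈S} a family of complex numbers such that for every ε > 0 the set {s ∈ S : |a_s| > ε} is finite. If for some κ ≥ 0 the family has greedy κ-sum equal to A, then for every κ' with κ' ≥ κ the family has greedy κ'-sum, and this greedy κ'-sum is also equal to A. -/
/-!
Write `R_κ` for `greedyPartialSum a κ`. Substituting `ε ↦ ε / u` turns the Riesz step
`κ ↦ κ + δ` into an average: with `B = ∫₀¹ u^κ (1 - u)^(δ-1) du`,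
`B · R_{κ+δ}(ε) = ∫₀¹ u^κ (1 - u)^(δ-1) R_κ(ε / u) du`,
which holds term by term because `∫_c^1 (u - c)^κ (1 - u)^(δ-1) du = (1 - c)^(κ+δ) B`.
The partial sums `R_κ` are bounded on `(0, ∞)`: near `0` they are close to `A`, and on
`[ε₁, ∞)` they are dominated by the finite sum `∑_{‖a s‖ > ε₁} ‖a s‖`. Dominated convergence
then gives `R_{κ+δ}(ε) → B⁻¹ · B · A = A`.
-/

open Filter Topology

/-- The Riesz-type partial sum of a family of complex numbers at level `ε > 0`:
`∑_{s : |a s| > ε} (1 - ε/|a s|)^κ • a s`. -/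
noncomputable def greedyPartialSum {S : Type*} (a : S → ℂ) (κ : ℝ) (ε : ℝ) : ℂ :=
  ∑ᶠ s ∈ {s | ε < ‖a s‖}, ((1 - ε / ‖a s‖) ^ κ : ℝ) • a s

/-- A family `a : S → ℂ` has greedy `κ`-sum `A` if its Riesz-type partial sums
converge to `A` as `ε → 0⁺`. -/
def HasGreedySum {S : Type*} (a : S → ℂ) (κ : ℝ) (A : ℂ) : Prop :=
  Tendsto (greedyPartialSum a κ) (𝓝[>] (0 : ℝ)) (𝓝 A)

open MeasureTheory Set intervalIntegral Interval

/-- `B(κ + 1, δ)`. -/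
noncomputable def rieszBeta (κ δ : ℝ) : ℝ := ∫ u in (0:ℝ)..1, u ^ κ * (1 - u) ^ (δ - 1)

theorem intervalIntegral.integral_indicator_Ioi {E : Type*} [NormedAddCommGroup E]
    [NormedSpace ℝ E] {f : ℝ → E} {μ : Measure ℝ} {a b c : ℝ} (h : c ∈ Icc a b) :
    ∫ x in a..b, (Ioi c).indicator f x ∂μ = ∫ x in c..b, f x ∂μ := by
  rw [integral_of_le (h.1.trans h.2), integral_of_le h.2,
    MeasureTheory.integral_indicator measurableSet_Ioi, Measure.restrict_restrict measurableSet_Ioi,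
    inter_comm, Ioc_inter_Ioi, sup_eq_right.2 h.1]

section Beta

variable {κ δ : ℝ}

theorem intervalIntegrable_sub_rpow_mul_sub_rpow (hκ : 0 ≤ κ) (hδ : 0 < δ) (μ ν a b : ℝ) :
    IntervalIntegrable (fun t => (t - μ) ^ κ * (ν - t) ^ (δ - 1)) volume a b := by
  have h := (intervalIntegrable_rpow' (a := ν - a) (b := ν - b)
    (by linarith : -1 < δ - 1)).comp_sub_left ν
  simp only [sub_sub_cancel] at h
  exact h.continuousOn_mul
    ((Real.continuous_rpow_const hκ).comp (continuous_sub_right μ)).continuousOn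

theorem integral_sub_rpow_mul_sub_rpow (κ δ : ℝ) {μ ν : ℝ} (h : μ < ν) :
    ∫ t in μ..ν, (t - μ) ^ κ * (ν - t) ^ (δ - 1) = (ν - μ) ^ (κ + δ) * rieszBeta κ δ := by
  have hd : 0 < ν - μ := sub_pos.2 h
  have hsub := integral_comp_mul_add (a := 0) (b := 1)
    (fun t => (t - μ) ^ κ * (ν - t) ^ (δ - 1)) hd.ne' μ
  have hscale : EqOn (fun u => ((ν - μ) * u + μ - μ) ^ κ * (ν - ((ν - μ) * u + μ)) ^ (δ - 1))
      (fun u => (ν - μ) ^ (κ + δ - 1) * (u ^ κ * (1 - u) ^ (δ - 1))) (uIcc 0 1) := by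
    intro u hu
    rw [uIcc_of_le zero_le_one] at hu
    dsimp only
    rw [show (ν - μ) * u + μ - μ = (ν - μ) * u by ring,
      show ν - ((ν - μ) * u + μ) = (ν - μ) * (1 - u) by ring,
      Real.mul_rpow hd.le hu.1, Real.mul_rpow hd.le (sub_nonneg.2 hu.2),
      show κ + δ - 1 = κ + (δ - 1) by ring, Real.rpow_add hd]
    ring
  rw [integral_congr hscale, intervalIntegral.integral_const_mul] at hsub
  simp only [mul_zero, zero_add, mul_one, sub_add_cancel, smul_eq_mul] at hsub
  rw [Real.rpow_sub_one hd.ne', eq_inv_mul_iff_mul_eq₀ hd.ne'] at hsub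
  rw [rieszBeta, ← hsub]
  field_simp

theorem intervalIntegrable_rpow_mul_one_sub_rpow (hκ : 0 ≤ κ) (hδ : 0 < δ) :
    IntervalIntegrable (fun u => u ^ κ * (1 - u) ^ (δ - 1)) volume 0 1 := by
  simpa using intervalIntegrable_sub_rpow_mul_sub_rpow hκ hδ 0 1 0 1

theorem rieszBeta_pos (hκ : 0 ≤ κ) (hδ : 0 < δ) : 0 < rieszBeta κ δ :=
  intervalIntegral_pos_of_pos_on (intervalIntegrable_rpow_mul_one_sub_rpow hκ hδ)
    (fun _ hu => mul_pos (Real.rpow_pos_of_pos hu.1 _) (Real.rpow_pos_of_pos (sub_pos.2 hu.2) _))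
    zero_lt_one

end Beta

theorem tendsto_integral_smul_comp_div {E : Type*} [NormedAddCommGroup E] [NormedSpace ℝ E]
    [CompleteSpace E] {w : ℝ → ℝ} {g : ℝ → E} {A : E} {M : ℝ}
    (hw : IntervalIntegrable w volume 0 1) (hg : Tendsto g (𝓝[>] 0) (𝓝 A)) (hM : ∀ ε > 0, ‖g ε‖ ≤ M)
    (hint : ∀ ε > 0, IntervalIntegrable (fun u => w u • g (ε / u)) volume 0 1) :
    Tendsto (fun ε => ∫ u in (0:ℝ)..1, w u • g (ε / u)) (𝓝[>] 0)
      (𝓝 ((∫ u in (0:ℝ)..1, w u) • A)) := by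
  rw [← intervalIntegral.integral_smul_const]
  refine tendsto_integral_filter_of_dominated_convergence (fun u => ‖w u‖ * M) ?_ ?_
    (hw.norm.mul_const M) (ae_of_all _ fun u hu => ?_)
  · filter_upwards [self_mem_nhdsWithin] with ε hε using (hint ε hε).def'.1
  · filter_upwards [self_mem_nhdsWithin] with ε hε
    refine ae_of_all _ fun u hu => ?_
    rw [uIoc_of_le zero_le_one] at hu
    rw [norm_smul]
    exact mul_le_mul_of_nonneg_left (hM _ (div_pos hε hu.1)) (norm_nonneg _)
  · rw [uIoc_of_le zero_le_one] at hu
    have hdiv : Tendsto (fun ε => ε / u) (𝓝[>] 0) (𝓝[>] 0) := by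
      refine tendsto_nhdsWithin_of_tendsto_nhds_of_eventually_within _ ?_ ?_
      · simpa using ((continuous_id.div_const u).tendsto 0).mono_left nhdsWithin_le_nhds
      · filter_upwards [self_mem_nhdsWithin] with ε hε using div_pos hε hu.1
    exact (hg.comp hdiv).const_smul (w u)

theorem rpow_smul_ite_eq_indicator_smul {E : Type*} [AddCommGroup E] [Module ℝ E] {κ ε r u : ℝ}
    (hr : 0 < r) (hu : 0 < u) (x : E) :
    u ^ κ • (if ε / u < r then ((1 - ε / u / r) ^ κ : ℝ) • x else 0) =
      (Ioi (ε / r)).indicator (fun u => (u - ε / r) ^ κ) u • x := by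
  have hiff : ε / u < r ↔ u ∈ Ioi (ε / r) := by
    rw [mem_Ioi, div_lt_iff₀ hu, div_lt_iff₀' hr]
  by_cases hs : ε / u < r
  · have hw : 0 ≤ 1 - ε / r / u := sub_nonneg.2 ((div_le_one hu).2 (hiff.1 hs).out.le)
    rw [if_pos hs, indicator_of_mem (hiff.1 hs), smul_smul, div_right_comm,
      ← Real.mul_rpow hu.le hw, mul_one_sub, mul_div_cancel₀ _ hu.ne']
  · rw [if_neg hs, indicator_of_notMem (mt hiff.2 hs), smul_zero, zero_smul]

section Greedy

variable {S : Type*} {a : S → ℂ} {κ : ℝ}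

theorem greedyPartialSum_eq_sum_ite {ε₀ ε : ℝ} (hP : {s | ε₀ < ‖a s‖}.Finite) (hε : ε₀ ≤ ε) :
    greedyPartialSum a κ ε =
      ∑ s ∈ hP.toFinset, if ε < ‖a s‖ then ((1 - ε / ‖a s‖) ^ κ : ℝ) • a s else 0 := by
  have hQ : {s | ε < ‖a s‖}.Finite := hP.subset fun s hs => hε.trans_lt hs
  rw [← Finset.sum_filter, greedyPartialSum, finsum_mem_eq_finite_toFinset_sum _ hQ]
  congr 1
  ext s
  simp only [Finite.mem_toFinset, Finset.mem_filter, mem_ofPred_eq]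
  exact ⟨fun hs => ⟨hε.trans_lt hs, hs⟩, And.right⟩

theorem norm_greedyPartialSum_le (hκ : 0 ≤ κ) {ε₀ ε : ℝ} (hP : {s | ε₀ < ‖a s‖}.Finite)
    (hε : ε₀ ≤ ε) (hε0 : 0 ≤ ε) :
    ‖greedyPartialSum a κ ε‖ ≤ ∑ s ∈ hP.toFinset, ‖a s‖ := by
  rw [greedyPartialSum_eq_sum_ite hP hε]
  refine (norm_sum_le _ _).trans (Finset.sum_le_sum fun s _ => ?_)
  split_ifs with hs
  · have hw : 0 ≤ 1 - ε / ‖a s‖ := sub_nonneg.2 ((div_le_one (hε0.trans_lt hs)).2 hs.le)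
    rw [norm_smul, Real.norm_of_nonneg (Real.rpow_nonneg hw κ)]
    refine mul_le_of_le_one_left (norm_nonneg _) (Real.rpow_le_one hw ?_ hκ)
    linarith [div_nonneg hε0 (norm_nonneg (a s))]
  · simp

theorem HasGreedySum.exists_norm_le (hfin : ∀ ε > (0 : ℝ), {s | ε < ‖a s‖}.Finite)
    (hκ : 0 ≤ κ) {A : ℂ} (h : HasGreedySum a κ A) :
    ∃ M, ∀ ε > 0, ‖greedyPartialSum a κ ε‖ ≤ M := by
  obtain ⟨ε₁, hε₁, hnear⟩ := mem_nhdsGT_iff_exists_Ioo_subset.1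
    (h.norm.eventually (gt_mem_nhds (lt_add_one ‖A‖)))
  refine ⟨max (‖A‖ + 1) (∑ s ∈ (hfin ε₁ hε₁).toFinset, ‖a s‖), fun ε hε => ?_⟩
  rcases lt_or_ge ε ε₁ with hsmall | hlarge
  · exact le_max_of_le_left (hnear ⟨hε, hsmall⟩).le
  · exact le_max_of_le_right (norm_greedyPartialSum_le hκ (hfin ε₁ hε₁) hlarge hε.le)

theorem integral_smul_greedyPartialSum_div (hκ : 0 ≤ κ) {δ : ℝ} (hδ : 0 < δ) {ε : ℝ}
    (hε : 0 < ε) (hP : {s | ε < ‖a s‖}.Finite) :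
    IntervalIntegrable (fun u => (u ^ κ * (1 - u) ^ (δ - 1)) • greedyPartialSum a κ (ε / u))
        volume 0 1 ∧
      ∫ u in (0:ℝ)..1, (u ^ κ * (1 - u) ^ (δ - 1)) • greedyPartialSum a κ (ε / u) =
        rieszBeta κ δ • greedyPartialSum a (κ + δ) ε := by
  set F : S → ℝ → ℂ := fun s u =>
    (Ioi (ε / ‖a s‖)).indicator (fun u => (u - ε / ‖a s‖) ^ κ * (1 - u) ^ (δ - 1)) u • a s
  have hnorm : ∀ s ∈ hP.toFinset, ε < ‖a s‖ := fun s hs => hP.mem_toFinset.1 hs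
  have hc : ∀ s ∈ hP.toFinset, 0 ≤ ε / ‖a s‖ ∧ ε / ‖a s‖ < 1 := fun s hs =>
    ⟨by positivity, (div_lt_one (hε.trans (hnorm s hs))).2 (hnorm s hs)⟩
  have hsum : ∀ u ∈ Ι (0:ℝ) 1,
      (u ^ κ * (1 - u) ^ (δ - 1)) • greedyPartialSum a κ (ε / u) = ∑ s ∈ hP.toFinset, F s u := by
    intro u hu
    rw [uIoc_of_le zero_le_one] at hu
    rw [greedyPartialSum_eq_sum_ite hP (le_div_self hε.le hu.1 hu.2), Finset.smul_sum]
    refine Finset.sum_congr rfl fun s hs => ?_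
    rw [mul_comm, mul_smul, rpow_smul_ite_eq_indicator_smul (hε.trans (hnorm s hs)) hu.1,
      smul_smul, mul_comm, ← indicator_mul_left _ _ fun u => (1 - u) ^ (δ - 1)]
  have hF : ∀ s ∈ hP.toFinset, IntervalIntegrable (F s) volume 0 1 := by
    intro s _
    rw [intervalIntegrable_iff]
    exact ((intervalIntegrable_sub_rpow_mul_sub_rpow hκ hδ _ 1 0 1).def'.indicator
      measurableSet_Ioi).smul_const (a s)
  have hFint : ∀ s ∈ hP.toFinset,
      ∫ u in (0:ℝ)..1, F s u = ((1 - ε / ‖a s‖) ^ (κ + δ) * rieszBeta κ δ) • a s := by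
    intro s hs
    rw [intervalIntegral.integral_smul_const,
      integral_indicator_Ioi ⟨(hc s hs).1, (hc s hs).2.le⟩,
      integral_sub_rpow_mul_sub_rpow κ δ (hc s hs).2]
  refine ⟨(IntervalIntegrable.sum _ hF).congr fun u hu => ?_, ?_⟩
  · rw [Finset.sum_apply, hsum u hu]
  rw [integral_congr_ae (ae_of_all _ hsum), integral_finsetSum hF, Finset.sum_congr rfl hFint,
    greedyPartialSum, finsum_mem_eq_finite_toFinset_sum _ hP, Finset.smul_sum]
  refine Finset.sum_congr rfl fun s _ => ?_
  rw [smul_smul, mul_comm]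

end Greedy

/-- Consistency theorem for greedy κ-sums: if a family with finite level sets has
greedy `κ`-sum `A`, then it has greedy `κ'`-sum `A` for every `κ' ≥ κ`. -/
theorem greedySum_consistency {S : Type*} (a : S → ℂ)
    (hfin : ∀ ε > (0 : ℝ), {s | ε < ‖a s‖}.Finite)
    (κ κ' : ℝ) (hκ : 0 ≤ κ) (hκκ' : κ ≤ κ') (A : ℂ)
    (h : HasGreedySum a κ A) :
    HasGreedySum a κ' A := by
  obtain rfl | hlt := hκκ'.eq_or_lt
  · exact h
  obtain ⟨δ, hδ, rfl⟩ : ∃ δ > 0, κ' = κ + δ := ⟨κ' - κ, sub_pos.2 hlt, by ring⟩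
  obtain ⟨M, hM⟩ := h.exists_norm_le hfin hκ
  have hB : rieszBeta κ δ ≠ 0 := (rieszBeta_pos hκ hδ).ne'
  have hlim : Tendsto (fun ε => ∫ u in (0:ℝ)..1,
      (u ^ κ * (1 - u) ^ (δ - 1)) • greedyPartialSum a κ (ε / u)) (𝓝[>] 0)
      (𝓝 (rieszBeta κ δ • A)) := tendsto_integral_smul_comp_div
    (intervalIntegrable_rpow_mul_one_sub_rpow hκ hδ) h hM
    fun ε hε => (integral_smul_greedyPartialSum_div hκ hδ hε (hfin ε hε)).1
  have hmean := hlim.const_smul (rieszBeta κ δ)⁻¹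
  rw [inv_smul_smul₀ hB] at hmean
  refine hmean.congr' (eventually_mem_nhdsWithin.mono fun ε hε => ?_)
  rw [(integral_smul_greedyPartialSum_div hκ hδ hε (hfin ε hε)).2, inv_smul_smul₀ hB]
end

section
/- Non-summability of products of greedy summable arrays: There exist index sets S and T and families of complex numbers (a_s)_{s∈S} and (b_t)_{t∈T}, each with finite level sets {s : |a_s| > ε} and {t : |b_t| > ε} for every ε > 0 and each possessing a greedy sum, such that the product family (a_s · b_t)_{(s,t)∈S×T} does not possess a greedy sum. -/
/-
Split `c k = (-1)^k / √(k+1)` into `2^(k+1)` complex numbers of modulus `2^(-k)`. Cutting at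
`ε` keeps whole levels, so the greedy partial sums of this family are partial sums of `∑ c k`,
which converges as an alternating series. A product of entries of levels `k` and `l` has modulus
`2^(-(k+l))`, so the greedy partial sums of the product family are partial sums of the Cauchy
square of `∑ c k`; its `n`-th term is a sum of `n + 1` terms of sign `(-1)^n` and modulus at
least `1/(n+1)`, hence does not tend to `0`.
-/

open Filter Topology

open Finset

lemma greedyPartialSum_zero {S : Type*} (a : S → ℂ) (ε : ℝ) :
    greedyPartialSum a 0 ε = ∑ᶠ s ∈ {s | ε < ‖a s‖}, a s := by
  simp [greedyPartialSum]

lemma tendsto_zero_of_tendsto_sum_range {E : Type*} [NormedAddCommGroup E] {u : ℕ → E} {A : E}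
    (h : Tendsto (fun n => ∑ k ∈ range n, u k) atTop (𝓝 A)) : Tendsto u atTop (𝓝 0) := by
  simpa [sum_range_succ_sub_sum] using ((tendsto_add_atTop_iff_nat 1).2 h).sub h

noncomputable def dyadicLevel (ε : ℝ) : ℕ :=
  if h : 0 < ε then
    Nat.find ((exists_pow_lt_of_lt_one h (by norm_num : (2⁻¹ : ℝ) < 1)).imp fun _ => le_of_lt)
  else 0

lemma lt_dyadicLevel_iff {ε : ℝ} (hε : 0 < ε) {k : ℕ} : k < dyadicLevel ε ↔ ε < 2⁻¹ ^ k := by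
  rw [dyadicLevel, dif_pos hε, Nat.lt_find_iff]
  simp only [not_le]
  exact ⟨fun h => h k le_rfl,
    fun h m hm => h.trans_le (pow_le_pow_of_le_one (by norm_num) (by norm_num) hm)⟩

lemma dyadicLevel_inv_two_pow (L : ℕ) : dyadicLevel (2⁻¹ ^ L) = L :=
  eq_of_forall_lt_iff fun k => by
    rw [lt_dyadicLevel_iff (by positivity),
      pow_lt_pow_iff_right_of_lt_one₀ (by norm_num) (by norm_num)]

lemma tendsto_dyadicLevel : Tendsto dyadicLevel (𝓝[>] 0) atTop := by
  refine tendsto_atTop.2 fun N => ?_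
  filter_upwards [Ioo_mem_nhdsGT (by positivity : (0 : ℝ) < 2⁻¹ ^ N)] with ε hε
  exact ((lt_dyadicLevel_iff hε.1).2 hε.2).le

section DyadicFamily

variable {ι κ : ℕ → Type*} [∀ k, Fintype (ι k)] [∀ k, Fintype (κ k)]
  {f : (Σ k, ι k) → ℂ} {g : (Σ k, κ k) → ℂ} {ε : ℝ}

lemma setOf_lt_norm_eq_sigma (hf : ∀ x, ‖f x‖ = 2⁻¹ ^ x.1) (hε : 0 < ε) :
    {x | ε < ‖f x‖} = ((range (dyadicLevel ε)).sigma fun k => (univ : Finset (ι k)) :) := by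
  ext x
  simp [hf, lt_dyadicLevel_iff hε]

lemma finite_setOf_lt_norm (hf : ∀ x, ‖f x‖ = 2⁻¹ ^ x.1) (hε : 0 < ε) :
    {x | ε < ‖f x‖}.Finite := by
  rw [setOf_lt_norm_eq_sigma hf hε]
  exact finite_toSet _

lemma greedyPartialSum_eq_sum_range (hf : ∀ x, ‖f x‖ = 2⁻¹ ^ x.1) (hε : 0 < ε) :
    greedyPartialSum f 0 ε = ∑ k ∈ range (dyadicLevel ε), ∑ i, f ⟨k, i⟩ := by
  rw [greedyPartialSum_zero, setOf_lt_norm_eq_sigma hf hε, finsum_mem_coe_finset, sum_sigma]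

lemma greedyPartialSum_mul_eq_sum_range (hf : ∀ x, ‖f x‖ = 2⁻¹ ^ x.1)
    (hg : ∀ y, ‖g y‖ = 2⁻¹ ^ y.1) (hε : 0 < ε) :
    greedyPartialSum (fun p : (Σ k, ι k) × (Σ l, κ l) => f p.1 * g p.2) 0 ε =
      ∑ n ∈ range (dyadicLevel ε), ∑ kl ∈ antidiagonal n,
        (∑ i, f ⟨kl.1, i⟩) * ∑ j, g ⟨kl.2, j⟩ := by
  set K := dyadicLevel ε
  set R := (((range K).sigma fun _ => univ) ×ˢ ((range K).sigma fun _ => univ)).filter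
    fun p : (Σ k, ι k) × (Σ l, κ l) => p.1.1 + p.2.1 < K
  have hset : {p : (Σ k, ι k) × (Σ l, κ l) | ε < ‖f p.1 * g p.2‖} = ↑R := by
    ext p
    simp only [Set.mem_ofPred_eq, norm_mul, hf, hg, ← pow_add, ← lt_dyadicLevel_iff hε, R,
      coe_filter, mem_product, mem_sigma, mem_range, mem_univ, and_true]
    omega
  have hmem : ∀ p, p ∈ R ↔ p.1 ∈ (range K).sigma (fun _ => univ) ∧
      p.2 ∈ (range (K - p.1.1)).sigma fun _ => univ := by
    intro p
    simp only [R, mem_filter, mem_product, mem_sigma, mem_range, mem_univ, and_true]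
    omega
  rw [greedyPartialSum_zero, hset, finsum_mem_coe_finset, sum_finset_product R _
    (fun x => (range (K - x.1)).sigma fun _ => univ) hmem, sum_sigma]
  simp only [← mul_sum, sum_sigma, ← sum_mul, Nat.sum_antidiagonal_eq_sum_range_succ fun k l =>
    (∑ i, f ⟨k, i⟩) * ∑ j, g ⟨l, j⟩, Nat.succ_eq_add_one]
  rw [sum_range_diag_flip K fun k l => (∑ i, f ⟨k, i⟩) * ∑ j, g ⟨l, j⟩]
  simp only [mul_sum]

lemma hasGreedySum_of_tendsto_sum_range (hf : ∀ x, ‖f x‖ = 2⁻¹ ^ x.1) {A : ℂ}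
    (h : Tendsto (fun n => ∑ k ∈ range n, ∑ i, f ⟨k, i⟩) atTop (𝓝 A)) :
    HasGreedySum f 0 A :=
  (h.comp tendsto_dyadicLevel).congr' <| eventually_nhdsWithin_of_forall fun _ hε =>
    (greedyPartialSum_eq_sum_range hf hε).symm

lemma HasGreedySum.tendsto_sum_range_antidiagonal (hf : ∀ x, ‖f x‖ = 2⁻¹ ^ x.1)
    (hg : ∀ y, ‖g y‖ = 2⁻¹ ^ y.1) {C : ℂ}
    (h : HasGreedySum (fun p : (Σ k, ι k) × (Σ l, κ l) => f p.1 * g p.2) 0 C) :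
    Tendsto (fun N => ∑ n ∈ range N, ∑ kl ∈ antidiagonal n,
      (∑ i, f ⟨kl.1, i⟩) * ∑ j, g ⟨kl.2, j⟩) atTop (𝓝 C) := by
  refine (h.comp (tendsto_pow_atTop_nhdsWithin_zero_of_lt_one (by norm_num : (0 : ℝ) < 2⁻¹)
    (by norm_num))).congr fun N => ?_
  rw [Function.comp_apply, greedyPartialSum_mul_eq_sum_range hf hg (by positivity),
    dyadicLevel_inv_two_pow]

end DyadicFamily

/-- Level `k` consists of `2 ^ k` conjugate pairs `2⁻¹ ^ k * exp (± i θ)` with `2 cos θ = c k`,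
so its entries sum to `c k`. -/
noncomputable def dyadicSplit (c : ℕ → ℝ) : (Σ k : ℕ, Fin (2 ^ k) × Bool) → ℂ :=
  fun x => ((2⁻¹ : ℝ) ^ x.1 : ℝ) *
    Complex.exp (↑(if x.2.2 then Real.arccos (c x.1 / 2) else -Real.arccos (c x.1 / 2)) *
      Complex.I)

lemma norm_dyadicSplit (c : ℕ → ℝ) (x : Σ k : ℕ, Fin (2 ^ k) × Bool) :
    ‖dyadicSplit c x‖ = 2⁻¹ ^ x.1 := by
  rw [dyadicSplit, norm_mul, Complex.norm_exp_ofReal_mul_I, mul_one, Complex.norm_real,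
    Real.norm_of_nonneg (by positivity)]

lemma sum_dyadicSplit {c : ℕ → ℝ} {k : ℕ} (hc : |c k| ≤ 2) :
    ∑ i, dyadicSplit c ⟨k, i⟩ = c k := by
  have hcos : Real.cos (Real.arccos (c k / 2)) = c k / 2 :=
    Real.cos_arccos (by linarith [neg_abs_le (c k)]) (by linarith [le_abs_self (c k)])
  have hpair : Complex.exp (Real.arccos (c k / 2) * Complex.I) +
      Complex.exp (↑(-Real.arccos (c k / 2)) * Complex.I) = c k := by
    rw [Complex.ofReal_neg, ← Complex.two_cos, ← Complex.ofReal_cos, hcos]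
    push_cast
    ring
  simp only [dyadicSplit, Fintype.sum_prod_type, Fintype.sum_bool, if_true, Bool.false_eq_true,
    if_false, ← mul_add, hpair, sum_const, card_univ, Fintype.card_fin, nsmul_eq_mul]
  push_cast
  rw [← mul_assoc, ← mul_pow]
  norm_num

noncomputable def altInvSqrt (k : ℕ) : ℝ := (-1) ^ k * (√(k + 1))⁻¹

lemma abs_altInvSqrt_le_one (k : ℕ) : |altInvSqrt k| ≤ 1 := by
  rw [altInvSqrt, abs_mul, abs_pow, abs_neg, abs_one, one_pow, one_mul, abs_inv,
    abs_of_pos (by positivity)]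
  exact inv_le_one_of_one_le₀ (Real.one_le_sqrt.2 (by simp))

lemma exists_tendsto_sum_range_altInvSqrt :
    ∃ A, Tendsto (fun n => ∑ k ∈ range n, altInvSqrt k) atTop (𝓝 A) := by
  refine Antitone.tendsto_alternating_series_of_tendsto_zero
    (fun m n hmn => inv_anti₀ (by positivity) (Real.sqrt_le_sqrt (by simpa using hmn))) ?_
  exact tendsto_inv_atTop_zero.comp <| Real.tendsto_sqrt_atTop.comp <|
    tendsto_atTop_add_const_right _ 1 tendsto_natCast_atTop_atTop

lemma one_le_abs_sum_antidiagonal_altInvSqrt (n : ℕ) :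
    1 ≤ |∑ kl ∈ antidiagonal n, altInvSqrt kl.1 * altInvSqrt kl.2| := by
  have hterm : ∀ kl ∈ antidiagonal n,
      altInvSqrt kl.1 * altInvSqrt kl.2 = (-1) ^ n * (√(kl.1 + 1) * √(kl.2 + 1))⁻¹ := by
    intro kl hkl
    rw [HasAntidiagonal.mem_antidiagonal] at hkl
    rw [altInvSqrt, altInvSqrt, ← hkl, pow_add, mul_inv]
    ring
  have hbound : ∀ kl ∈ antidiagonal n, ((n : ℝ) + 1)⁻¹ ≤ (√(kl.1 + 1) * √(kl.2 + 1))⁻¹ := by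
    intro kl hkl
    rw [HasAntidiagonal.mem_antidiagonal] at hkl
    have hsq : √((n : ℝ) + 1) * √((n : ℝ) + 1) = n + 1 := Real.mul_self_sqrt (by positivity)
    rw [← hsq]
    gcongr <;> exact_mod_cast (by omega)
  calc (1 : ℝ) = ∑ _kl ∈ antidiagonal n, ((n : ℝ) + 1)⁻¹ := by
        rw [sum_const, Nat.card_antidiagonal, nsmul_eq_mul]
        push_cast
        field_simp
    _ ≤ ∑ kl ∈ antidiagonal n, (√(kl.1 + 1) * √(kl.2 + 1))⁻¹ := sum_le_sum hbound
    _ = |∑ kl ∈ antidiagonal n, altInvSqrt kl.1 * altInvSqrt kl.2| := by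
        rw [sum_congr rfl hterm, ← mul_sum, abs_mul, abs_pow, abs_neg, abs_one, one_pow, one_mul,
          abs_of_nonneg (sum_nonneg fun _ _ => by positivity)]

lemma not_tendsto_sum_range_antidiagonal_altInvSqrt (C : ℂ) :
    ¬ Tendsto (fun N => ∑ n ∈ range N, ∑ kl ∈ antidiagonal n,
      (altInvSqrt kl.1 : ℂ) * altInvSqrt kl.2) atTop (𝓝 C) := by
  intro h
  obtain ⟨n, hn⟩ := ((tendsto_zero_of_tendsto_sum_range h).norm.eventually_lt_const
    (by norm_num : ‖(0 : ℂ)‖ < 1)).exists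
  refine (one_le_abs_sum_antidiagonal_altInvSqrt n).not_gt ?_
  simpa [← Complex.ofReal_mul, ← Complex.ofReal_sum, Complex.norm_real] using hn

/-- There exist greedy summable families (with finite level sets) whose product
family is not greedy summable. -/
theorem exists_greedySummable_product_not_greedySummable :
    ∃ (S T : Type) (a : S → ℂ) (b : T → ℂ),
      (∀ ε > (0 : ℝ), {s | ε < ‖a s‖}.Finite) ∧
      (∀ ε > (0 : ℝ), {t | ε < ‖b t‖}.Finite) ∧
      (∃ A : ℂ, HasGreedySum a 0 A) ∧
      (∃ B : ℂ, HasGreedySum b 0 B) ∧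
      ¬ ∃ C : ℂ, HasGreedySum (fun p : S × T => a p.1 * b p.2) 0 C := by
  have hnorm := norm_dyadicSplit altInvSqrt
  have hsum (k : ℕ) : ∑ i, dyadicSplit altInvSqrt ⟨k, i⟩ = altInvSqrt k :=
    sum_dyadicSplit ((abs_altInvSqrt_le_one k).trans one_le_two)
  obtain ⟨A, hA⟩ := exists_tendsto_sum_range_altInvSqrt
  have hasSum : HasGreedySum (dyadicSplit altInvSqrt) 0 A :=
    hasGreedySum_of_tendsto_sum_range hnorm <| by
      simpa only [hsum, Complex.ofReal_sum, Function.comp_def] using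
        (Complex.continuous_ofReal.tendsto A).comp hA
  refine ⟨_, _, dyadicSplit altInvSqrt, dyadicSplit altInvSqrt,
    fun _ => finite_setOf_lt_norm hnorm, fun _ => finite_setOf_lt_norm hnorm,
    ⟨A, hasSum⟩, ⟨A, hasSum⟩, ?_⟩
  rintro ⟨C, hC⟩
  exact not_tendsto_sum_range_antidiagonal_altInvSqrt C <| by
    simpa only [hsum] using hC.tendsto_sum_range_antidiagonal hnorm hnorm
end

section
/- Product theorem for Riesz means (Hardy–Riesz, Theorem 56, used to prove Theorem 2): Let (λ_m)_{m∈ℕ} and (μ_n)_{n∈ℕ} be strictly increasing sequences of positive real numbers tending to infinity, let (a_m)_{m∈ℕ} and (b_n)_{n∈ℕ} be complex numbers, and let κ₁, κ₂ ≥ 0. If ∑ a_m is Riesz summable with parameters ((λ_m), κ₁) to A and ∑ b_n is Riesz summable with parameters ((μ_n), κ₂) to B, then the double family (a_m b_n) is Riesz summable with respect to the exponents ν_{m,n} = λ_m + μ_n and order κ₁ + κ₂ + 1 to the product A·B; that is, the finite sums ∑_{(m,n) : λ_m + μ_n < ω} (1 − (λ_m + μ_n)/ω)^{κ₁+κ₂+1}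 · a_m b_n converge to A·B as ω → +∞. -/
open Filter Topology

/-- The Riesz mean of order `κ` of a series `∑ a n` with exponents `l n`, at the
point `ω`: `∑_{n : l n < ω} (1 - l n / ω)^κ • a n`. -/
noncomputable def rieszMean (l : ℕ → ℝ) (a : ℕ → ℂ) (κ : ℝ) (ω : ℝ) : ℂ :=
  ∑ᶠ n ∈ {n | l n < ω}, ((1 - l n / ω) ^ κ : ℝ) • a n

/-- The series `∑ a n` is Riesz summable with parameters `(l, κ)` to `A` if its
Riesz means of order `κ` converge to `A` as `ω → ∞`. -/
def RieszSummableTo (l : ℕ → ℝ) (a : ℕ → ℂ) (κ : ℝ) (A : ℂ) : Prop :=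
  Tendsto (rieszMean l a κ) atTop (𝓝 A)

/-!
Let `R¹(t) = ∑_{λ_m < t} (t - λ_m)^κ₁ a_m = t^κ₁ C¹(t)` be the unnormalised Riesz sum and `C¹` the
Riesz mean, and similarly `R²`, `C²` for `b`. Because
`∫₀^ω (t - λ)₊^κ₁ (ω - t - μ)₊^κ₂ dt = β (ω - λ - μ)₊^(κ₁+κ₂+1)` with `β = ∫₀¹ s^κ₁ (1 - s)^κ₂ ds`,
the Riesz sum of order `κ₁ + κ₂ + 1` of the product family is `β⁻¹ ∫₀^ω R¹(t) R²(ω - t) dt`.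
Substituting `t = ωs`, its Riesz mean becomes `β⁻¹ ∫₀¹ s^κ₁ (1 - s)^κ₂ C¹(ωs) C²(ω(1 - s)) ds`.
The means `C¹`, `C²` are bounded and tend to `A`, `B`, so dominated convergence gives `A * B`.
-/

open MeasureTheory Set

/-- Euler's `B(κ₁ + 1, κ₂ + 1)`. -/
noncomputable def betaIntegralReal (κ₁ κ₂ : ℝ) : ℝ := ∫ s in (0 : ℝ)..1, s ^ κ₁ * (1 - s) ^ κ₂

lemma betaIntegralReal_pos {κ₁ κ₂ : ℝ} (hκ₁ : 0 ≤ κ₁) (hκ₂ : 0 ≤ κ₂) :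
    0 < betaIntegralReal κ₁ κ₂ := by
  refine intervalIntegral.intervalIntegral_pos_of_pos_on ?_ (fun s hs => ?_) zero_lt_one
  · exact ((Real.continuous_rpow_const hκ₁).mul ((Real.continuous_rpow_const hκ₂).comp
      (continuous_const.sub continuous_id))).intervalIntegrable 0 1
  · exact mul_pos (Real.rpow_pos_of_pos hs.1 _) (Real.rpow_pos_of_pos (sub_pos.2 hs.2) _)

lemma integral_rpow_mul_sub_rpow (κ₁ κ₂ : ℝ) {D : ℝ} (hD : 0 < D) :
    ∫ u in (0 : ℝ)..D, u ^ κ₁ * (D - u) ^ κ₂ = D ^ (κ₁ + κ₂ + 1) * betaIntegralReal κ₁ κ₂ := by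
  have hscale : ∀ s ∈ uIcc (0 : ℝ) 1,
      (D * s) ^ κ₁ * (D - D * s) ^ κ₂ = D ^ (κ₁ + κ₂) * (s ^ κ₁ * (1 - s) ^ κ₂) := by
    intro s hs
    rw [uIcc_of_le zero_le_one] at hs
    rw [show D - D * s = D * (1 - s) by ring, Real.mul_rpow hD.le hs.1,
      Real.mul_rpow hD.le (sub_nonneg.2 hs.2), Real.rpow_add hD]
    ring
  have h := intervalIntegral.integral_comp_mul_left (a := 0) (b := 1)
    (fun u => u ^ κ₁ * (D - u) ^ κ₂) hD.ne'
  rw [intervalIntegral.integral_congr hscale, intervalIntegral.integral_const_mul, mul_zero,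
    mul_one, eq_inv_smul_iff₀ hD.ne', smul_eq_mul] at h
  rw [← h, Real.rpow_add_one hD.ne', betaIntegralReal]
  ring

/- Truncated powers `(x - p)₊^κ` are written as indicators: `max (x - p) 0 ^ κ` would be `1`
for `x ≤ p` when `κ = 0`. -/
lemma indicator_rpow_mul_indicator_rpow (κ₁ κ₂ p q ω t : ℝ) :
    (Ioi p).indicator (fun x => (x - p) ^ κ₁) t * (Ioi q).indicator (fun x => (x - q) ^ κ₂) (ω - t)
      = (Ioo p (ω - q)).indicator (fun x => (x - p) ^ κ₁ * (ω - q - x) ^ κ₂) t := by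
  simp only [indicator_apply, mem_Ioi, mem_Ioo]
  split_ifs
  · ring_nf
  all_goals first | (exfalso; grind) | simp

lemma integral_indicator_rpow_mul_rpow (κ₁ κ₂ : ℝ) {p q : ℝ} (hp : 0 ≤ p) (hq : 0 ≤ q) (ω : ℝ) :
    ∫ t in (0 : ℝ)..ω, (Ioo p (ω - q)).indicator (fun x => (x - p) ^ κ₁ * (ω - q - x) ^ κ₂) t
      = (Ioi (p + q)).indicator (fun x => (x - (p + q)) ^ (κ₁ + κ₂ + 1)) ω
          * betaIntegralReal κ₁ κ₂ := by
  rcases le_or_gt ω (p + q) with hω | hω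
  · rw [indicator_of_notMem (notMem_Ioi.2 hω), zero_mul, Ioo_eq_empty (by linarith),
      indicator_empty, intervalIntegral.integral_zero]
  have hsub : Ioo p (ω - q) ⊆ Ioc 0 ω := fun t ht => ⟨hp.trans_lt ht.1, by linarith [ht.2]⟩
  rw [indicator_of_mem (mem_Ioi.2 hω), intervalIntegral.integral_of_le (by linarith),
    integral_indicator measurableSet_Ioo, Measure.restrict_restrict measurableSet_Ioo,
    inter_eq_self_of_subset_left hsub, ← integral_Ioc_eq_integral_Ioo,
    ← intervalIntegral.integral_of_le (by linarith),
    ← integral_rpow_mul_sub_rpow κ₁ κ₂ (by linarith : 0 < ω - (p + q))]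
  have := intervalIntegral.integral_comp_sub_right (a := p) (b := ω - q)
    (fun u => u ^ κ₁ * (ω - (p + q) - u) ^ κ₂) p
  simp only [sub_self, show ω - q - p = ω - (p + q) by ring] at this
  rw [← this]
  congr 1 with t
  ring_nf

lemma finite_setOf_lt_of_tendsto_atTop {l : ℕ → ℝ} (hl : Tendsto l atTop atTop) (t : ℝ) :
    {n | l n < t}.Finite := by
  have h := hl.eventually_ge_atTop t
  rw [← Nat.cofinite_eq_atTop, eventually_cofinite] at h
  simpa using h

lemma setOf_add_lt_subset_prod {l μ : ℕ → ℝ} (hl : ∀ m, 0 ≤ l m) (hμ : ∀ n, 0 ≤ μ n) (t : ℝ) :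
    {p : ℕ × ℕ | l p.1 + μ p.2 < t} ⊆ {m | l m < t} ×ˢ {n | μ n < t} :=
  fun p (hp : l p.1 + μ p.2 < t) =>
    ⟨show l p.1 < t by linarith [hμ p.2], show μ p.2 < t by linarith [hl p.1]⟩

lemma finsum_mem_setOf_lt_eq_sum {ι E : Type*} [AddCommMonoid E] {ν : ι → ℝ} (g : ι → ℝ → E)
    {t : ℝ} {S : Finset ι} (hS : {i | ν i < t} ⊆ S) :
    ∑ᶠ i ∈ {i | ν i < t}, g i t = ∑ i ∈ S, (Ioi (ν i)).indicator (g i) t := by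
  rw [finsum_mem_def, finsum_eq_sum_of_support_subset _ (support_indicator_subset.trans hS)]
  rfl

lemma measurable_rieszMean {l : ℕ → ℝ} (hl : Tendsto l atTop atTop) (a : ℕ → ℂ) (κ : ℝ) :
    Measurable (rieszMean l a κ) := by
  have hsum : rieszMean l a κ
      = fun t => ∑' n, (Ioi (l n)).indicator (fun x => ((1 - l n / x) ^ κ : ℝ) • a n) t := by
    funext t
    have hS := (finite_setOf_lt_of_tendsto_atTop hl t).coe_toFinset.symm.subset
    refine (finsum_mem_setOf_lt_eq_sum (fun n x => ((1 - l n / x) ^ κ : ℝ) • a n) hS).trans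
      (tsum_eq_sum fun n hn => indicator_of_notMem ?_ _).symm
    simpa using hn
  rw [hsum]
  exact Measurable.tsum fun n => Measurable.indicator (by fun_prop) measurableSet_Ioi

lemma RieszSummableTo.exists_norm_le {l : ℕ → ℝ} {a : ℕ → ℂ} {κ : ℝ} {A : ℂ}
    (hl : ∀ n, 0 ≤ l n) (hltop : Tendsto l atTop atTop) (hκ : 0 ≤ κ)
    (ha : RieszSummableTo l a κ A) : ∃ M, ∀ t, ‖rieszMean l a κ t‖ ≤ M := by
  obtain ⟨M, hM⟩ := ha.norm.isBoundedUnder_le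
  obtain ⟨T, hT⟩ := eventually_atTop.1 (eventually_map.1 hM)
  set S := (finite_setOf_lt_of_tendsto_atTop hltop T).toFinset
  refine ⟨max M (∑ n ∈ S, ‖a n‖), fun t => ?_⟩
  rcases le_or_gt T t with ht | ht
  · exact le_max_of_le_left (hT t ht)
  refine le_max_of_le_right ?_
  have hS : {n | l n < t} ⊆ S := fun n hn => by simpa [S] using hn.out.trans ht
  rw [rieszMean, finsum_mem_setOf_lt_eq_sum (fun n x => ((1 - l n / x) ^ κ : ℝ) • a n) hS]
  refine (norm_sum_le _ _).trans (Finset.sum_le_sum fun n _ => ?_)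
  rw [indicator_apply]
  split_ifs with hn
  · have ht0 : 0 < t := (hl n).trans_lt hn
    have h₀ : 0 ≤ 1 - l n / t := sub_nonneg.2 ((div_le_one ht0).2 hn.le)
    have h₁ : (1 - l n / t) ^ κ ≤ 1 :=
      Real.rpow_le_one h₀ (sub_le_self _ (div_nonneg (hl n) ht0.le)) hκ
    rw [norm_smul, Real.norm_of_nonneg (Real.rpow_nonneg h₀ κ)]
    exact mul_le_of_le_one_left (norm_nonneg _) h₁
  · simp

noncomputable def rieszSum {ι : Type*} (ν : ι → ℝ) (f : ι → ℂ) (κ t : ℝ) : ℂ :=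
  ∑ᶠ i ∈ {i | ν i < t}, ((t - ν i) ^ κ : ℝ) • f i

lemma rieszSum_eq_sum_indicator {ι : Type*} {ν : ι → ℝ} (f : ι → ℂ) (κ : ℝ) {t : ℝ}
    {S : Finset ι} (hS : {i | ν i < t} ⊆ S) :
    rieszSum ν f κ t = ∑ i ∈ S, (Ioi (ν i)).indicator (fun x => (x - ν i) ^ κ) t • f i := by
  simp_rw [rieszSum, finsum_mem_setOf_lt_eq_sum (fun i x => ((x - ν i) ^ κ : ℝ) • f i) hS,
    indicator_smul_const_apply]

lemma rieszSum_eq_rpow_smul {ι : Type*} {ν : ι → ℝ} (f : ι → ℂ) (κ : ℝ) {t : ℝ} (ht : 0 < t)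
    (hfin : {i | ν i < t}.Finite) :
    rieszSum ν f κ t = t ^ κ • ∑ᶠ i ∈ {i | ν i < t}, ((1 - ν i / t) ^ κ : ℝ) • f i := by
  rw [rieszSum, smul_finsum_mem hfin]
  refine finsum_mem_congr rfl fun i (hi : ν i < t) => ?_
  rw [smul_smul, ← Real.mul_rpow ht.le (sub_nonneg.2 ((div_le_one ht).2 hi.le)), mul_sub, mul_one,
    mul_div_cancel₀ _ ht.ne']

lemma rieszSum_eq_rpow_smul_rieszMean {l : ℕ → ℝ} (hl : ∀ n, 0 ≤ l n)
    (hltop : Tendsto l atTop atTop) (a : ℕ → ℂ) (κ : ℝ) {t : ℝ} (ht : 0 ≤ t) :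
    rieszSum l a κ t = t ^ κ • rieszMean l a κ t := by
  rcases ht.eq_or_lt with rfl | ht
  · have h : {n | l n < 0} = ∅ := eq_empty_of_forall_notMem fun n hn => (hl n).not_gt hn
    rw [rieszSum, rieszMean, h, finsum_mem_empty, finsum_mem_empty, smul_zero]
  · exact rieszSum_eq_rpow_smul a κ ht (finite_setOf_lt_of_tendsto_atTop hltop t)

lemma integral_rieszSum_mul_rieszSum {l μ : ℕ → ℝ} (hl : ∀ m, 0 ≤ l m) (hμ : ∀ n, 0 ≤ μ n)
    (hltop : Tendsto l atTop atTop) (hμtop : Tendsto μ atTop atTop) (a b : ℕ → ℂ)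
    {κ₁ κ₂ : ℝ} (hκ₁ : 0 ≤ κ₁) (hκ₂ : 0 ≤ κ₂) {ω : ℝ} (hω : 0 ≤ ω) :
    ∫ t in (0 : ℝ)..ω, rieszSum l a κ₁ t * rieszSum μ b κ₂ (ω - t)
      = betaIntegralReal κ₁ κ₂ • rieszSum (fun p : ℕ × ℕ => l p.1 + μ p.2)
          (fun p => a p.1 * b p.2) (κ₁ + κ₂ + 1) ω := by
  set S := (finite_setOf_lt_of_tendsto_atTop hltop ω).toFinset
  set T := (finite_setOf_lt_of_tendsto_atTop hμtop ω).toFinset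
  have hS : ∀ t ≤ ω, {m | l m < t} ⊆ S := fun t ht m (hm : l m < t) => by
    simpa [S] using hm.trans_le ht
  have hT : ∀ t ≤ ω, {n | μ n < t} ⊆ T := fun t ht n (hn : μ n < t) => by
    simpa [T] using hn.trans_le ht
  have hST : {p : ℕ × ℕ | l p.1 + μ p.2 < ω} ⊆ ↑(S ×ˢ T) := by
    simpa [S, T] using setOf_add_lt_subset_prod hl hμ ω
  set ψ : ℕ × ℕ → ℝ → ℝ := fun p => (Ioo (l p.1) (ω - μ p.2)).indicator
    (fun x => (x - l p.1) ^ κ₁ * (ω - μ p.2 - x) ^ κ₂)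
  have hprod : ∀ t ∈ uIcc 0 ω, rieszSum l a κ₁ t * rieszSum μ b κ₂ (ω - t)
      = ∑ p ∈ S ×ˢ T, ψ p t • (a p.1 * b p.2) := by
    intro t ht
    rw [uIcc_of_le hω] at ht
    rw [rieszSum_eq_sum_indicator a κ₁ (hS t ht.2),
      rieszSum_eq_sum_indicator b κ₂ (hT (ω - t) (by linarith [ht.1])), Finset.sum_mul_sum,
      ← Finset.sum_product']
    refine Finset.sum_congr rfl fun p _ => ?_
    rw [smul_mul_smul_comm, indicator_rpow_mul_indicator_rpow]
  have hψ : ∀ p, IntervalIntegrable (ψ p) volume 0 ω := fun p => by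
    have h : IntervalIntegrable (fun x => (x - l p.1) ^ κ₁ * (ω - μ p.2 - x) ^ κ₂) volume 0 ω :=
      (((Real.continuous_rpow_const hκ₁).comp (continuous_id.sub continuous_const)).mul
        ((Real.continuous_rpow_const hκ₂).comp
          (continuous_const.sub continuous_id))).intervalIntegrable 0 ω
    exact ⟨h.1.indicator measurableSet_Ioo, h.2.indicator measurableSet_Ioo⟩
  rw [intervalIntegral.integral_congr hprod,
    intervalIntegral.integral_finsetSum fun p _ => (hψ p).smul_continuousOn continuousOn_const,
    rieszSum_eq_sum_indicator _ _ hST, Finset.smul_sum]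
  refine Finset.sum_congr rfl fun p _ => ?_
  rw [intervalIntegral.integral_smul_const,
    integral_indicator_rpow_mul_rpow κ₁ κ₂ (hl p.1) (hμ p.2), smul_smul, mul_comm]

lemma integral_rieszSum_mul_rieszSum_eq_smul {l μ : ℕ → ℝ} (hl : ∀ m, 0 ≤ l m)
    (hμ : ∀ n, 0 ≤ μ n) (hltop : Tendsto l atTop atTop) (hμtop : Tendsto μ atTop atTop)
    (a b : ℕ → ℂ) (κ₁ κ₂ : ℝ) {ω : ℝ} (hω : 0 < ω) :
    ∫ t in (0 : ℝ)..ω, rieszSum l a κ₁ t * rieszSum μ b κ₂ (ω - t)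
      = ω ^ (κ₁ + κ₂ + 1) • ∫ s in (0 : ℝ)..1, (s ^ κ₁ * (1 - s) ^ κ₂) •
          (rieszMean l a κ₁ (ω * s) * rieszMean μ b κ₂ (ω * (1 - s))) := by
  have h := intervalIntegral.integral_comp_mul_left (E := ℂ) (a := 0) (b := 1)
    (fun t => rieszSum l a κ₁ t * rieszSum μ b κ₂ (ω - t)) hω.ne'
  rw [mul_zero, mul_one, eq_inv_smul_iff₀ hω.ne'] at h
  rw [← h, Real.rpow_add_one hω.ne', mul_comm, ← smul_smul]
  congr 1
  rw [← intervalIntegral.integral_smul]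
  refine intervalIntegral.integral_congr fun s hs => ?_
  rw [uIcc_of_le zero_le_one] at hs
  have hs' : 0 ≤ 1 - s := sub_nonneg.2 hs.2
  rw [show ω - ω * s = ω * (1 - s) by ring,
    rieszSum_eq_rpow_smul_rieszMean hl hltop _ _ (mul_nonneg hω.le hs.1),
    rieszSum_eq_rpow_smul_rieszMean hμ hμtop _ _ (mul_nonneg hω.le hs'), smul_mul_smul_comm,
    smul_smul, Real.mul_rpow hω.le hs.1, Real.mul_rpow hω.le hs', Real.rpow_add hω]
  congr 1
  ring

lemma tendsto_integral_rieszMean_mul_rieszMean {l μ : ℕ → ℝ} (hl : ∀ m, 0 ≤ l m)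
    (hμ : ∀ n, 0 ≤ μ n) (hltop : Tendsto l atTop atTop) (hμtop : Tendsto μ atTop atTop)
    {a b : ℕ → ℂ} {κ₁ κ₂ : ℝ} (hκ₁ : 0 ≤ κ₁) (hκ₂ : 0 ≤ κ₂) {A B : ℂ}
    (ha : RieszSummableTo l a κ₁ A) (hb : RieszSummableTo μ b κ₂ B) :
    Tendsto (fun ω => ∫ s in (0 : ℝ)..1, (s ^ κ₁ * (1 - s) ^ κ₂) •
        (rieszMean l a κ₁ (ω * s) * rieszMean μ b κ₂ (ω * (1 - s))))
      atTop (𝓝 (betaIntegralReal κ₁ κ₂ • (A * B))) := by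
  obtain ⟨M₁, hM₁⟩ := ha.exists_norm_le hl hltop hκ₁
  obtain ⟨M₂, hM₂⟩ := hb.exists_norm_le hμ hμtop hκ₂
  have hw : Continuous fun s : ℝ => s ^ κ₁ * (1 - s) ^ κ₂ :=
    (Real.continuous_rpow_const hκ₁).mul
      ((Real.continuous_rpow_const hκ₂).comp (continuous_const.sub continuous_id))
  rw [betaIntegralReal, ← intervalIntegral.integral_smul_const]
  refine intervalIntegral.tendsto_integral_filter_of_dominated_convergence
    (fun s => s ^ κ₁ * (1 - s) ^ κ₂ * (M₁ * M₂)) (Eventually.of_forall fun ω => ?_)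
    (Eventually.of_forall fun ω => ?_) ((hw.mul continuous_const).intervalIntegrable 0 1) ?_
  · have h₁ := measurable_rieszMean hltop a κ₁
    have h₂ := measurable_rieszMean hμtop b κ₂
    exact (hw.measurable.smul ((h₁.comp (measurable_const_mul ω)).mul
      (h₂.comp ((measurable_const_sub 1).const_mul ω)))).aestronglyMeasurable
  · refine ae_of_all _ fun s hs => ?_
    rw [uIoc_of_le zero_le_one] at hs
    have hcoef : 0 ≤ s ^ κ₁ * (1 - s) ^ κ₂ :=
      mul_nonneg (Real.rpow_nonneg hs.1.le _) (Real.rpow_nonneg (sub_nonneg.2 hs.2) _)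
    rw [norm_smul, Real.norm_of_nonneg hcoef, norm_mul]
    exact mul_le_mul_of_nonneg_left
      (mul_le_mul (hM₁ _) (hM₂ _) (norm_nonneg _) ((norm_nonneg _).trans (hM₁ 0))) hcoef
  -- At `s = 1` the second mean is evaluated at `0`, and the weight does not vanish if `κ₂ = 0`.
  · filter_upwards [Measure.ae_ne volume 1] with s hs₁ hs
    rw [uIoc_of_le zero_le_one] at hs
    have h₁ := ha.comp (tendsto_id.atTop_mul_const hs.1)
    have h₂ := hb.comp (tendsto_id.atTop_mul_const (sub_pos.2 (lt_of_le_of_ne hs.2 hs₁)))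
    exact (h₁.mul h₂).const_smul _

theorem riesz_product_general (l μ : ℕ → ℝ)
    (hlpos : ∀ n, 0 < l n) (hltop : Tendsto l atTop atTop)
    (hμpos : ∀ n, 0 < μ n) (hμtop : Tendsto μ atTop atTop)
    (a b : ℕ → ℂ) (κ₁ κ₂ : ℝ) (hκ₁ : 0 ≤ κ₁) (hκ₂ : 0 ≤ κ₂) (A B : ℂ)
    (ha : RieszSummableTo l a κ₁ A) (hb : RieszSummableTo μ b κ₂ B) :
    Tendsto (fun ω : ℝ =>
        ∑ᶠ p ∈ {p : ℕ × ℕ | l p.1 + μ p.2 < ω},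
          ((1 - (l p.1 + μ p.2) / ω) ^ (κ₁ + κ₂ + 1) : ℝ) • (a p.1 * b p.2))
      atTop (𝓝 (A * B)) := by
  have hl : ∀ m, 0 ≤ l m := fun m => (hlpos m).le
  have hμ : ∀ n, 0 ≤ μ n := fun n => (hμpos n).le
  have hβ := (betaIntegralReal_pos hκ₁ hκ₂).ne'
  have hlim := (tendsto_integral_rieszMean_mul_rieszMean hl hμ hltop hμtop hκ₁ hκ₂ ha hb).const_smul
    (betaIntegralReal κ₁ κ₂)⁻¹
  rw [inv_smul_smul₀ hβ] at hlim
  refine hlim.congr' ?_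
  filter_upwards [eventually_gt_atTop 0] with ω hω
  have hfin : {p : ℕ × ℕ | l p.1 + μ p.2 < ω}.Finite :=
    ((finite_setOf_lt_of_tendsto_atTop hltop ω).prod
      (finite_setOf_lt_of_tendsto_atTop hμtop ω)).subset (setOf_add_lt_subset_prod hl hμ ω)
  have hK : ω ^ (κ₁ + κ₂ + 1) ≠ 0 := (Real.rpow_pos_of_pos hω _).ne'
  have hsum := (integral_rieszSum_mul_rieszSum hl hμ hltop hμtop a b hκ₁ hκ₂ hω.le).symm.trans
    (integral_rieszSum_mul_rieszSum_eq_smul hl hμ hltop hμtop a b κ₁ κ₂ hω)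
  rw [rieszSum_eq_rpow_smul _ _ hω hfin, smul_comm] at hsum
  rw [← smul_right_injective ℂ hK hsum, inv_smul_smul₀ hβ]
  rfl

/-- Product theorem for Riesz means (Hardy–Riesz, Theorem 56): if `∑ a m` is Riesz
summable with parameters `(l, κ₁)` to `A` and `∑ b n` with parameters `(m, κ₂)` to
`B`, then the double family `(a m * b n)` is Riesz summable with exponents
`ν_{m,n} = l m + m n` and order `κ₁ + κ₂ + 1` to `A * B`. -/
theorem riesz_product (l μ : ℕ → ℝ)
    (hlmono : StrictMono l) (hlpos : ∀ n, 0 < l n) (hltop : Tendsto l atTop atTop)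
    (hμmono : StrictMono μ) (hμpos : ∀ n, 0 < μ n) (hμtop : Tendsto μ atTop atTop)
    (a b : ℕ → ℂ) (κ₁ κ₂ : ℝ) (hκ₁ : 0 ≤ κ₁) (hκ₂ : 0 ≤ κ₂) (A B : ℂ)
    (ha : RieszSummableTo l a κ₁ A) (hb : RieszSummableTo μ b κ₂ B) :
    Tendsto (fun ω : ℝ =>
        ∑ᶠ p ∈ {p : ℕ × ℕ | l p.1 + μ p.2 < ω},
          ((1 - (l p.1 + μ p.2) / ω) ^ (κ₁ + κ₂ + 1) : ℝ) • (a p.1 * b p.2))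
      atTop (𝓝 (A * B)) :=
  riesz_product_general l μ hlpos hltop hμpos hμtop a b κ₁ κ₂ hκ₁ hκ₂ A B ha hb
end
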